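/- arXiv:1310.4987 — 4 statements merged into one kernel-verified Lean document; each statement's English description precedes it below -/
import Mathlib

section
/- Suppose A ⊇ B ⊇ C is a tower of rings, E : A → B is a B-B-bimodule projection splitting the extension A ⊇ B (i.e., E(1)=1 and E is B-linear on both sides), and the multiplication map μ : B ⊗_C A → A splits as a B-A-bimodule epimorphism. Then B ⊇ C is a separable extension. -/
/-!  A noncommutative relative tensor product `L ⊗_C R` for a ring `C` mapping
into rings `L` (acting on the right through `f`) and `R` (acting on the left
through `g`), together with the outer left `L`-action `lact`, the outer right
`R`-action `ract`, a lifting principle for balanced biadditive maps, and the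
multiplication map. -/

open scoped TensorProduct

noncomputable section
namespace NCT

variable {C L R : Type*} [Ring C] [Ring L] [Ring R]

/-- The submodule of relations `(l * f c) ⊗ r - l ⊗ (g c * r)`. -/
def rel (f : C →+* L) (g : C →+* R) : Submodule ℤ (L ⊗[ℤ] R) :=
  Submodule.span ℤ
    {x | ∃ (l : L) (c : C) (r : R), x = (l * f c) ⊗ₜ[ℤ] r - l ⊗ₜ[ℤ] (g c * r)}

/-- The relative tensor product `L ⊗_C R`. -/
def Tens (f : C →+* L) (g : C →+* R) : Type _ := (L ⊗[ℤ] R) ⧸ rel f g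

instance (f : C →+* L) (g : C →+* R) : AddCommGroup (Tens f g) :=
  inferInstanceAs (AddCommGroup ((L ⊗[ℤ] R) ⧸ rel f g))

variable (f : C →+* L) (g : C →+* R)

/-- The canonical image of `l ⊗ r` in `L ⊗_C R`. -/
def tmul (l : L) (r : R) : Tens f g := Submodule.Quotient.mk (l ⊗ₜ[ℤ] r)

lemma tmul_rel (l : L) (c : C) (r : R) :
    tmul f g (l * f c) r = tmul f g l (g c * r) := by
  refine (Submodule.Quotient.eq _).2 ?_
  exact Submodule.subset_span ⟨l, c, r, rfl⟩

lemma tmul_add_left (l l' : L) (r : R) :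
    tmul f g (l + l') r = tmul f g l r + tmul f g l' r := by
  show Submodule.Quotient.mk _ = _
  rw [TensorProduct.add_tmul, Submodule.Quotient.mk_add]; rfl

lemma tmul_add_right (l : L) (r r' : R) :
    tmul f g l (r + r') = tmul f g l r + tmul f g l r' := by
  show Submodule.Quotient.mk _ = _
  rw [TensorProduct.tmul_add, Submodule.Quotient.mk_add]; rfl

/-- Package a biadditive map as a bundled `AddMonoidHom`-valued hom. -/
def mkBilin {M N P : Type*} [AddCommGroup M] [AddCommGroup N] [AddCommGroup P]
    (φ : M → N → P)
    (h1 : ∀ m m' n, φ (m + m') n = φ m n + φ m' n)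
    (h2 : ∀ m n n', φ m (n + n') = φ m n + φ m n') : M →+ N →+ P :=
  AddMonoidHom.mk' (fun m => AddMonoidHom.mk' (φ m) (h2 m))
    (fun m m' => by ext n; exact h1 m m' n)

@[simp] lemma mkBilin_apply {M N P : Type*} [AddCommGroup M] [AddCommGroup N] [AddCommGroup P]
    (φ : M → N → P) (h1 h2) (m : M) (n : N) : mkBilin φ h1 h2 m n = φ m n := rfl

/-- Lift a balanced biadditive map to the relative tensor product. -/
def lift {P : Type*} [AddCommGroup P] (φ : L →+ R →+ P)
    (hbal : ∀ l c r, φ (l * f c) r = φ l (g c * r)) : Tens f g →+ P :=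
  (Submodule.liftQ (rel f g)
    (TensorProduct.liftAddHom φ (by
      intro n l r
      simp only [AddMonoidHom.map_zsmul, AddMonoidHom.smul_apply]) ).toIntLinearMap
    (by
      rw [rel, Submodule.span_le]
      rintro x ⟨l, c, r, rfl⟩
      simp only [SetLike.mem_coe, LinearMap.mem_ker, AddMonoidHom.coe_toIntLinearMap,
        map_sub, TensorProduct.liftAddHom_tmul]
      rw [hbal, sub_self])).toAddMonoidHom

@[simp] lemma lift_tmul {P : Type*} [AddCommGroup P] (φ : L →+ R →+ P)
    (hbal : ∀ l c r, φ (l * f c) r = φ l (g c * r)) (l : L) (r : R) :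
    lift f g φ hbal (tmul f g l r) = φ l r := rfl

/-- The outer left action of `L` on `L ⊗_C R`. -/
def lact (l : L) : Tens f g →+ Tens f g :=
  lift f g (mkBilin (fun l' r => tmul f g (l * l') r)
      (fun a b r => by rw [mul_add, tmul_add_left])
      (fun a r s => by rw [tmul_add_right]))
    (fun l' c r => by simp only [mkBilin_apply]; rw [← mul_assoc, tmul_rel])

@[simp] lemma lact_tmul (l l' : L) (r : R) :
    lact f g l (tmul f g l' r) = tmul f g (l * l') r := rfl

/-- The outer right action of `R` on `L ⊗_C R`. -/
def ract (r : R) : Tens f g →+ Tens f g :=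
  lift f g (mkBilin (fun l' r' => tmul f g l' (r' * r))
      (fun a b r' => by rw [tmul_add_left])
      (fun a r' s => by rw [add_mul, tmul_add_right]))
    (fun l' c r' => by simp only [mkBilin_apply]; rw [tmul_rel, mul_assoc])

@[simp] lemma ract_tmul (r r' : R) (l : L) :
    ract f g r (tmul f g l r') = tmul f g l (r' * r) := rfl

/-- The map induced on relative tensor products by a ring map on the left factor. -/
def mapLeft {L' : Type*} [Ring L'] (h : L →+* L') :
    Tens f g →+ Tens (h.comp f) g :=
  lift f g (mkBilin (fun l r => tmul (h.comp f) g (h l) r)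
      (fun a b r => by rw [map_add, tmul_add_left])
      (fun a r s => by rw [tmul_add_right]))
    (fun l c r => by
      simp only [mkBilin_apply, map_mul]
      exact tmul_rel (h.comp f) g (h l) c r)

@[simp] lemma mapLeft_tmul {L' : Type*} [Ring L'] (h : L →+* L') (l : L) (r : R) :
    mapLeft f g h (tmul f g l r) = tmul (h.comp f) g (h l) r := rfl

/-- The multiplication map `L ⊗_C R → R`, `l ⊗ r ↦ jl l * r`, for a ring map
`jl : L → R` compatible with the two maps from `C`. -/
def mulMap (jl : L →+* R) (hcomp : ∀ c, jl (f c) = g c) : Tens f g →+ R :=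
  lift f g (mkBilin (fun l r => jl l * r)
      (fun a b r => by rw [map_add, add_mul])
      (fun a r s => by rw [mul_add]))
    (fun l c r => by simp only [mkBilin_apply]; rw [map_mul, hcomp, mul_assoc])

@[simp] lemma mulMap_tmul (jl : L →+* R) (hcomp : ∀ c, jl (f c) = g c) (l : L) (r : R) :
    mulMap f g jl hcomp (tmul f g l r) = jl l * r := rfl

/-- Induction principle: every element of `L ⊗_C R` is built from `tmul`s. -/
lemma tens_induction {p : Tens f g → Prop} (zero : p 0)
    (tm : ∀ l r, p (tmul f g l r)) (add : ∀ x y, p x → p y → p (x + y)) :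
    ∀ x, p x := by
  intro x
  obtain ⟨y, rfl⟩ := Submodule.Quotient.mk_surjective _ x
  induction y using TensorProduct.induction_on with
  | zero => exact zero
  | tmul l r => exact tm l r
  | add a b ha hb =>
      rw [Submodule.Quotient.mk_add]
      exact add _ _ ha hb

end NCT
end

noncomputable section
open NCT

/-- The tower `A ⊇ B ⊇ C` (given by injective ring maps `ι : C → B`, `j : B → A`) is
*left relative H-separable*: `B ⊗_C A ⊕ * ≅ A^n` as `B`-`A`-bimodules. -/
def LeftRelHSep {C B A : Type*} [Ring C] [Ring B] [Ring A]
    (ι : C →+* B) (j : B →+* A) (n : ℕ) : Prop :=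
  ∃ (i : Tens ι (j.comp ι) →+ (Fin n → A)) (p : (Fin n → A) →+ Tens ι (j.comp ι)),
    (∀ (b : B) x, i (lact ι (j.comp ι) b x) = fun k => j b * i x k) ∧
    (∀ (a : A) x, i (ract ι (j.comp ι) a x) = fun k => i x k * a) ∧
    (∀ (b : B) v, p (fun k => j b * v k) = lact ι (j.comp ι) b (p v)) ∧
    (∀ (a : A) v, p (fun k => v k * a) = ract ι (j.comp ι) a (p v)) ∧
    ∀ x, p (i x) = x

/-- `B` is a *left relative separable extension of `C` in `A`*: the multiplication map
`μ : B ⊗_C A → A` splits as a `B`-`A`-bimodule epimorphism. -/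
def LeftRelSep {C B A : Type*} [Ring C] [Ring B] [Ring A]
    (ι : C →+* B) (j : B →+* A) : Prop :=
  ∃ σ : A →+ Tens ι (j.comp ι),
    (∀ (b : B) (a : A), σ (j b * a) = lact ι (j.comp ι) b (σ a)) ∧
    (∀ (a a' : A), σ (a * a') = ract ι (j.comp ι) a' (σ a)) ∧
    ∀ a, mulMap ι (j.comp ι) j (fun _ => rfl) (σ a) = a

/-- `B ⊇ C` is a separable extension: there is a `B`-central element
`e ∈ B ⊗_C B` with `μ(e) = 1`. -/
def IsSepExt {C B : Type*} [Ring C] [Ring B] (ι : C →+* B) : Prop :=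
  ∃ e : Tens ι ι, (∀ b : B, lact ι ι b e = ract ι ι b e) ∧
    mulMap ι ι (RingHom.id B) (fun _ => rfl) e = 1

/-! A splitting `σ` of `μ : B ⊗_C A → A` makes `σ 1` an element of `B ⊗_C A` with `μ (σ 1) = 1`
on which the left action of `b` agrees with the right action of `j b`, both being `σ (j b)`.
The bimodule projection `E` is balanced over `C`, so `id ⊗ E : B ⊗_C A → B ⊗_C B` is well
defined and `B`-`B`-linear; it sends `σ 1` to a `B`-central element `e` with `μ e = E 1 = 1`. -/

namespace NCT

variable {C L R R' : Type*} [Ring C] [Ring L] [Ring R] [Ring R'] (f : C →+* L) (g : C →+* R)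

theorem hom_ext {P : Type*} [AddCommGroup P] {φ ψ : Tens f g →+ P}
    (h : ∀ l r, φ (tmul f g l r) = ψ (tmul f g l r)) : φ = ψ :=
  AddMonoidHom.ext <| tens_induction f g (by rw [map_zero, map_zero]) h
    fun x y hx hy => by rw [map_add, map_add, hx, hy]

def mapRight (g' : C →+* R') (φ : R →+ R') (hφ : ∀ c r, φ (g c * r) = g' c * φ r) :
    Tens f g →+ Tens f g' :=
  lift f g (mkBilin (fun l r => tmul f g' l (φ r))
      (fun l l' r => tmul_add_left f g' l l' (φ r))
      (fun l r r' => by rw [map_add, tmul_add_right]))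
    (fun l c r => by simp only [mkBilin_apply]; rw [tmul_rel, hφ])

variable (g' : C →+* R') (φ : R →+ R') (hφ : ∀ c r, φ (g c * r) = g' c * φ r)

@[simp] lemma mapRight_tmul (l : L) (r : R) :
    mapRight f g g' φ hφ (tmul f g l r) = tmul f g' l (φ r) := rfl

lemma mapRight_lact (l : L) (x : Tens f g) :
    mapRight f g g' φ hφ (lact f g l x) = lact f g' l (mapRight f g g' φ hφ x) :=
  DFunLike.congr_fun
    (hom_ext f g (φ := (mapRight f g g' φ hφ).comp (lact f g l))
      (ψ := (lact f g' l).comp (mapRight f g g' φ hφ)) fun _ _ => rfl) x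

lemma mapRight_ract {r : R} {r' : R'} (h : ∀ s, φ (s * r) = φ s * r') (x : Tens f g) :
    mapRight f g g' φ hφ (ract f g r x) = ract f g' r' (mapRight f g g' φ hφ x) :=
  DFunLike.congr_fun
    (hom_ext f g (φ := (mapRight f g g' φ hφ).comp (ract f g r))
      (ψ := (ract f g' r').comp (mapRight f g g' φ hφ))
      fun l s => by simp only [AddMonoidHom.comp_apply, ract_tmul, mapRight_tmul, h]) x

lemma mulMap_mapRight (jl : L →+* R) (jl' : L →+* R') (hcomp : ∀ c, jl (f c) = g c)
    (hcomp' : ∀ c, jl' (f c) = g' c) (h : ∀ l r, φ (jl l * r) = jl' l * φ r) (x : Tens f g) :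
    mulMap f g' jl' hcomp' (mapRight f g g' φ hφ x) = φ (mulMap f g jl hcomp x) :=
  DFunLike.congr_fun
    (hom_ext f g (φ := (mulMap f g' jl' hcomp').comp (mapRight f g g' φ hφ))
      (ψ := φ.comp (mulMap f g jl hcomp))
      fun l r => by simp only [AddMonoidHom.comp_apply, mapRight_tmul, mulMap_tmul, h]) x

end NCT

theorem LeftRelSep.exists_lact_eq_ract_mulMap_eq_one {C B A : Type*} [Ring C] [Ring B] [Ring A]
    {ι : C →+* B} {j : B →+* A} (h : LeftRelSep ι j) :
    ∃ x : Tens ι (j.comp ι), (∀ b, lact ι (j.comp ι) b x = ract ι (j.comp ι) (j b) x) ∧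
      mulMap ι (j.comp ι) j (fun _ => rfl) x = 1 := by
  obtain ⟨σ, hσl, hσr, hσμ⟩ := h
  exact ⟨σ 1, fun b => by rw [← hσl, ← hσr, mul_one, one_mul], hσμ 1⟩

theorem separable_of_split_of_leftRelSep_general
    {C B A : Type*} [Ring C] [Ring B] [Ring A]
    (ι : C →+* B) (j : B →+* A)
    (E : A →+ B) (hEproj : ∀ b : B, E (j b) = b)
    (hEbil : ∀ (b : B) (a : A) (b' : B), E (j b * a * j b') = b * E a * b')
    (hsplit : LeftRelSep ι j) :
    IsSepExt ι := by
  have hEl : ∀ b a, E (j b * a) = b * E a := fun b a => by simpa using hEbil b a 1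
  have hEr : ∀ a b, E (a * j b) = E a * b := fun a b => by simpa using hEbil 1 a b
  obtain ⟨x, hx_central, hx_one⟩ := hsplit.exists_lact_eq_ract_mulMap_eq_one
  have hEC : ∀ c a, E (j (ι c) * a) = ι c * E a := fun c => hEl (ι c)
  refine ⟨mapRight ι (j.comp ι) ι E hEC x, fun b => ?_, ?_⟩
  · rw [← mapRight_lact, hx_central, mapRight_ract _ _ _ _ _ (hEr · b)]
  · rw [mulMap_mapRight ι (j.comp ι) ι E hEC j (RingHom.id B)
      (fun _ => rfl) (fun _ => rfl) hEl, hx_one, ← map_one j, hEproj]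

/-- if `E : A → B` is a `B`-`B`-bimodule projection splitting the
extension `A ⊇ B`, and `μ : B ⊗_C A → A` splits as a `B`-`A`-bimodule epimorphism,
then `B ⊇ C` is a separable extension. -/
theorem separable_of_split_of_leftRelSep
    {C B A : Type*} [Ring C] [Ring B] [Ring A]
    (ι : C →+* B) (j : B →+* A)
    (hι : Function.Injective ι) (hj : Function.Injective j)
    (E : A →+ B) (hEproj : ∀ b : B, E (j b) = b)
    (hEbil : ∀ (b : B) (a : A) (b' : B), E (j b * a * j b') = b * E a * b')
    (hsplit : LeftRelSep ι j) :
    IsSepExt ι :=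
  separable_of_split_of_leftRelSep_general ι j E hEproj hEbil hsplit

end
end

section
/- A ring extension A ⊇ B is H-separable (A ⊗_B A ⊕ * ≅ A^n as A-A-bimodules for some n) if and only if there exist elements e_1,…,e_n ∈ (A ⊗_B A)^A (A-central elements) and r_1,…,r_n ∈ A^B (the centralizer of B in A) such that 1 ⊗_B 1 = Σ_{i=1}^n r_i e_i. -/
/-!  A noncommutative relative tensor product `L ⊗_C R` for a ring `C` mapping
into rings `L` (acting on the right through `f`) and `R` (acting on the left
through `g`), together with the outer left `L`-action `lact`, the outer right
`R`-action `ract`, a lifting principle for balanced biadditive maps, and the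
multiplication map. -/

open scoped TensorProduct

noncomputable section
open NCT

/-!
If `A ⊗_B A` is a bimodule direct summand of `Aⁿ` via `i` and `p`, then `e_k := p(δ_k)` is
`A`-central because `p` is bilinear, and `r_k := i(1 ⊗ 1)_k` lies in `A^B` because `1 ⊗ 1`
is `B`-central and `i` is bilinear; decomposing `1 ⊗ 1 = p(i(1 ⊗ 1))` along the standard basis
gives `1 ⊗ 1 = Σ r_k e_k`. Conversely, `x ↦ (a r_k a')_k` on `a ⊗ a'` and `v ↦ Σ v_k e_k`
are bimodule maps, and centrality of the `e_k` turns `Σ a r_k a' e_k` into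
`a (Σ r_k e_k) a' = a ⊗ a'`.
-/

lemma Pi.mul_single_one {ι M : Type*} [DecidableEq ι] [MulZeroOneClass M] (i : ι) (a : M) :
    (fun j => a * (Pi.single i 1 : ι → M) j) = Pi.single i a := by
  funext j
  exact (Pi.single_mul_right_apply i j (fun _ => a) 1).symm.trans (by rw [mul_one])

lemma Pi.single_one_mul {ι M : Type*} [DecidableEq ι] [MulZeroOneClass M] (i : ι) (a : M) :
    (fun j => (Pi.single i 1 : ι → M) j * a) = Pi.single i a := by
  funext j
  exact (Pi.single_mul_left_apply i j 1 (fun _ => a)).symm.trans (by rw [one_mul])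

namespace NCT

section Actions

variable {C L R : Type*} [Ring C] [Ring L] [Ring R] (f : C →+* L) (g : C →+* R)

lemma lact_add (l l' : L) (x : Tens f g) :
    lact f g (l + l') x = lact f g l x + lact f g l' x := by
  induction x using tens_induction with
  | zero => simp only [map_zero, add_zero]
  | tm a r => rw [lact_tmul, lact_tmul, lact_tmul, add_mul, tmul_add_left]
  | add x y hx hy => rw [map_add, map_add, map_add, hx, hy, add_add_add_comm]

lemma lact_mul (l l' : L) (x : Tens f g) :
    lact f g (l * l') x = lact f g l (lact f g l' x) := by
  induction x using tens_induction with
  | zero => simp only [map_zero]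
  | tm a r => rw [lact_tmul, lact_tmul, lact_tmul, mul_assoc]
  | add x y hx hy => rw [map_add, map_add, map_add, hx, hy]

lemma lact_ract_comm (l : L) (r : R) (x : Tens f g) :
    lact f g l (ract f g r x) = ract f g r (lact f g l x) := by
  induction x using tens_induction with
  | zero => simp only [map_zero]
  | tm a b => rfl
  | add x y hx hy => rw [map_add, map_add, map_add, map_add, hx, hy]

lemma lact_tmul_one_one (c : C) :
    lact f g (f c) (tmul f g 1 1) = ract f g (g c) (tmul f g 1 1) := by
  simpa only [lact_tmul, ract_tmul, mul_one, one_mul] using tmul_rel f g 1 c 1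

lemma eq_sum_lact_single {n : ℕ} (p : (Fin n → L) →+ Tens f g)
    (hp : ∀ (l : L) v, p (fun k => l * v k) = lact f g l (p v)) (v : Fin n → L) :
    p v = ∑ k, lact f g (v k) (p (Pi.single k 1)) := by
  conv_lhs => rw [← Finset.univ_sum_single v, map_sum]
  refine Finset.sum_congr rfl fun k _ => ?_
  rw [← hp, Pi.mul_single_one]

def sumLact {n : ℕ} (e : Fin n → Tens f g) : (Fin n → L) →+ Tens f g :=
  AddMonoidHom.mk' (fun v => ∑ k, lact f g (v k) (e k)) fun v w => by
    simp only [Pi.add_apply, lact_add, Finset.sum_add_distrib]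

@[simp] lemma sumLact_apply {n : ℕ} (e : Fin n → Tens f g) (v : Fin n → L) :
    sumLact f g e v = ∑ k, lact f g (v k) (e k) := rfl

lemma sumLact_mul_left {n : ℕ} (e : Fin n → Tens f g) (l : L) (v : Fin n → L) :
    sumLact f g e (fun k => l * v k) = lact f g l (sumLact f g e v) := by
  simp only [sumLact_apply, lact_mul, map_sum]

end Actions

section SameRing

variable {C A : Type*} [Ring C] [Ring A] (f g : C →+* A)

lemma lact_eq_ract_of_bilinear {n : ℕ} (p : (Fin n → A) →+ Tens f g)
    (hpl : ∀ (a : A) v, p (fun k => a * v k) = lact f g a (p v))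
    (hpr : ∀ (a : A) v, p (fun k => v k * a) = ract f g a (p v)) (k : Fin n) (a : A) :
    lact f g a (p (Pi.single k 1)) = ract f g a (p (Pi.single k 1)) := by
  rw [← hpl, ← hpr, Pi.mul_single_one, Pi.single_one_mul]

lemma sumLact_mul_right {n : ℕ} (e : Fin n → Tens f g)
    (he : ∀ k (a : A), lact f g a (e k) = ract f g a (e k)) (a : A) (v : Fin n → A) :
    sumLact f g e (fun k => v k * a) = ract f g a (sumLact f g e v) := by
  simp only [sumLact_apply, map_sum]
  refine Finset.sum_congr rfl fun k _ => ?_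
  rw [lact_mul, he, lact_ract_comm]

def sandwich {n : ℕ} (r : Fin n → A) (hr : ∀ k c, f c * r k = r k * g c) :
    Tens f g →+ (Fin n → A) :=
  lift f g
    (mkBilin (fun a a' k => a * r k * a')
      (fun a b a' => by funext k; simp only [add_mul, Pi.add_apply])
      (fun a a' a'' => by funext k; simp only [mul_add, Pi.add_apply]))
    (fun a c a' => by
      funext k
      simp only [mkBilin_apply]
      rw [mul_assoc a, hr, ← mul_assoc, mul_assoc])

@[simp] lemma sandwich_tmul {n : ℕ} (r : Fin n → A) (hr : ∀ k c, f c * r k = r k * g c)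
    (a a' : A) : sandwich f g r hr (tmul f g a a') = fun k => a * r k * a' := rfl

lemma sandwich_lact {n : ℕ} (r : Fin n → A) (hr : ∀ k c, f c * r k = r k * g c)
    (a : A) (x : Tens f g) :
    sandwich f g r hr (lact f g a x) = fun k => a * sandwich f g r hr x k := by
  induction x using tens_induction with
  | zero => funext k; simp only [map_zero, Pi.zero_apply, mul_zero]
  | tm l l' => funext k; simp only [lact_tmul, sandwich_tmul, mul_assoc]
  | add x y hx hy => funext k; simp only [map_add, hx, hy, Pi.add_apply, mul_add]

lemma sandwich_ract {n : ℕ} (r : Fin n → A) (hr : ∀ k c, f c * r k = r k * g c)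
    (a : A) (x : Tens f g) :
    sandwich f g r hr (ract f g a x) = fun k => sandwich f g r hr x k * a := by
  induction x using tens_induction with
  | zero => funext k; simp only [map_zero, Pi.zero_apply, zero_mul]
  | tm l l' => funext k; simp only [ract_tmul, sandwich_tmul, mul_assoc]
  | add x y hx hy => funext k; simp only [map_add, hx, hy, Pi.add_apply, add_mul]

lemma sumLact_sandwich {n : ℕ} (e : Fin n → Tens f g) (r : Fin n → A)
    (hr : ∀ k c, f c * r k = r k * g c)
    (he : ∀ k (a : A), lact f g a (e k) = ract f g a (e k))
    (hsum : tmul f g 1 1 = ∑ k, lact f g (r k) (e k)) (x : Tens f g) :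
    sumLact f g e (sandwich f g r hr x) = x := by
  induction x using tens_induction with
  | zero => rw [map_zero, map_zero]
  | tm a a' =>
      calc sumLact f g e (sandwich f g r hr (tmul f g a a'))
          = lact f g a (ract f g a' (∑ k, lact f g (r k) (e k))) := by
            simp only [sandwich_tmul, sumLact_apply, map_sum]
            refine Finset.sum_congr rfl fun k _ => ?_
            rw [lact_mul, lact_mul, he k a', lact_ract_comm]
        _ = tmul f g a a' := by rw [← hsum, ract_tmul, lact_tmul, one_mul, mul_one]
  | add x y hx hy => rw [map_add, map_add, hx, hy]

end SameRing

end NCT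

theorem hSeparable_iff_casimir_general
    {B A : Type*} [Ring B] [Ring A]
    (j : B →+* A) :
    (∃ (n : ℕ) (i : Tens j j →+ (Fin n → A)) (p : (Fin n → A) →+ Tens j j),
      (∀ (a : A) x, i (lact j j a x) = fun k => a * i x k) ∧
      (∀ (a : A) x, i (ract j j a x) = fun k => i x k * a) ∧
      (∀ (a : A) v, p (fun k => a * v k) = lact j j a (p v)) ∧
      (∀ (a : A) v, p (fun k => v k * a) = ract j j a (p v)) ∧
      ∀ x, p (i x) = x) ↔
    (∃ (n : ℕ) (e : Fin n → Tens j j) (r : Fin n → A),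
      (∀ (k : Fin n) (a : A), lact j j a (e k) = ract j j a (e k)) ∧
      (∀ (k : Fin n) (b : B), r k * j b = j b * r k) ∧
      tmul j j 1 1 = ∑ k, lact j j (r k) (e k)) := by
  constructor
  · rintro ⟨n, i, p, hil, hir, hpl, hpr, hpi⟩
    refine ⟨n, fun k => p (Pi.single k 1), i (tmul j j 1 1),
      lact_eq_ract_of_bilinear j j p hpl hpr, fun k b => ?_, ?_⟩
    · have hcentral := congrArg i (lact_tmul_one_one j j b)
      rw [hil, hir] at hcentral
      exact (congrFun hcentral k).symm
    · exact (hpi _).symm.trans (eq_sum_lact_single j j p hpl _)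
  · rintro ⟨n, e, r, hcen, hcom, hsum⟩
    have hr : ∀ k b, j b * r k = r k * j b := fun k b => (hcom k b).symm
    exact ⟨n, sandwich j j r hr, sumLact j j e, sandwich_lact j j r hr, sandwich_ract j j r hr,
      sumLact_mul_left j j e, sumLact_mul_right j j e hcen, sumLact_sandwich j j e r hr hcen hsum⟩

/-- a ring extension `A ⊇ B` is H-separable iff there are `A`-central
elements `e_i ∈ (A ⊗_B A)^A` and centralizer elements `r_i ∈ A^B` with
`1 ⊗ 1 = Σ r_i e_i`. -/
theorem hSeparable_iff_casimir
    {B A : Type*} [Ring B] [Ring A]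
    (j : B →+* A) (hj : Function.Injective j) :
    (∃ (n : ℕ) (i : Tens j j →+ (Fin n → A)) (p : (Fin n → A) →+ Tens j j),
      (∀ (a : A) x, i (lact j j a x) = fun k => a * i x k) ∧
      (∀ (a : A) x, i (ract j j a x) = fun k => i x k * a) ∧
      (∀ (a : A) v, p (fun k => a * v k) = lact j j a (p v)) ∧
      (∀ (a : A) v, p (fun k => v k * a) = ract j j a (p v)) ∧
      ∀ x, p (i x) = x) ↔
    (∃ (n : ℕ) (e : Fin n → Tens j j) (r : Fin n → A),
      (∀ (k : Fin n) (a : A), lact j j a (e k) = ract j j a (e k)) ∧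
      (∀ (k : Fin n) (b : B), r k * j b = j b * r k) ∧
      tmul j j 1 1 = ∑ k, lact j j (r k) (e k)) :=
  hSeparable_iff_casimir_general j

end
end

section
/- Let A ⊇ B ⊇ C be a left relative H-separable tower, i.e., B ⊗_C A ⊕ * ≅ A^n as B-A-bimodules. Then the centralizer D = A^C is a finitely generated projective left module over the centralizer R = A^B. -/
/-!  A noncommutative relative tensor product `L ⊗_C R` for a ring `C` mapping
into rings `L` (acting on the right through `f`) and `R` (acting on the left
through `g`), together with the outer left `L`-action `lact`, the outer right
`R`-action `ract`, a lifting principle for balanced biadditive maps, and the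
multiplication map. -/

open scoped TensorProduct

noncomputable section
open NCT

/-!
Write `D = A^C` and `R = A^B`. Splitting `B ⊗_C A` off `A^n` via `i` and `p`, the
elements `e_k = p(δ_k)` are `B`-central, the coordinates `d_k` of `i(1 ⊗ 1)` lie in `D`,
and `1 ⊗ 1 = ∑ e_k d_k`. For `x ∈ D`, the map `l ⊗ r ↦ l x r` is well defined on
`B ⊗_C A`, sends `B`-central elements into `R`, and sends `1 ⊗ 1` to `x`; so
`h_k(x) = e_k¹ x e_k²` and the `d_k` form a dual basis of `D` over `R`.
-/

section DualBasis

variable {C B A : Type*} [Ring C] [Ring B] [Ring A] (ι : C →+* B) (j : B →+* A)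

def midMul (x : Subring.centralizer (Set.range (j.comp ι))) : Tens ι (j.comp ι) →+ A :=
  lift ι (j.comp ι)
    (mkBilin (fun l r => j l * (x : A) * r)
      (fun a b r => by rw [map_add, add_mul, add_mul])
      (fun a r s => by rw [mul_add]))
    (fun l c r => by
      have hc : j (ι c) * (x : A) = (x : A) * j (ι c) :=
        Subring.mem_centralizer_iff.mp x.2 _ ⟨c, rfl⟩
      simp only [mkBilin_apply, map_mul, RingHom.comp_apply, mul_assoc]
      rw [← mul_assoc (j (ι c)), hc, mul_assoc])

variable {ι j}

@[simp] lemma midMul_tmul (x : Subring.centralizer (Set.range (j.comp ι))) (l : B) (r : A) :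
    midMul ι j x (tmul ι (j.comp ι) l r) = j l * (x : A) * r := rfl

lemma midMul_lact (x : Subring.centralizer (Set.range (j.comp ι))) (b : B)
    (t : Tens ι (j.comp ι)) :
    midMul ι j x (lact ι (j.comp ι) b t) = j b * midMul ι j x t := by
  induction t using tens_induction with
  | zero => simp
  | tm l r => simp [mul_assoc]
  | add u v hu hv => simp [hu, hv, mul_add]

lemma midMul_ract (x : Subring.centralizer (Set.range (j.comp ι))) (a : A)
    (t : Tens ι (j.comp ι)) :
    midMul ι j x (ract ι (j.comp ι) a t) = midMul ι j x t * a := by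
  induction t using tens_induction with
  | zero => simp
  | tm l r => simp [mul_assoc]
  | add u v hu hv => simp [hu, hv, add_mul]

lemma midMul_add (x y : Subring.centralizer (Set.range (j.comp ι))) (t : Tens ι (j.comp ι)) :
    midMul ι j (x + y) t = midMul ι j x t + midMul ι j y t := by
  induction t using tens_induction with
  | zero => simp
  | tm l r => simp [mul_add, add_mul]
  | add u v hu hv => simp only [map_add, hu, hv]; abel

lemma midMul_inclusion_mul
    (hRD : Subring.centralizer (Set.range j) ≤ Subring.centralizer (Set.range (j.comp ι)))
    (r : Subring.centralizer (Set.range j)) (x : Subring.centralizer (Set.range (j.comp ι)))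
    (t : Tens ι (j.comp ι)) :
    midMul ι j (Subring.inclusion hRD r * x) t = (r : A) * midMul ι j x t := by
  induction t using tens_induction with
  | zero => simp
  | tm l a =>
      have hr : j l * (r : A) = (r : A) * j l :=
        Subring.mem_centralizer_iff.mp r.2 _ ⟨l, rfl⟩
      simp only [midMul_tmul, Subring.coe_mul, Subring.coe_inclusion, ← mul_assoc, hr]
  | add u v hu hv => rw [map_add, map_add, hu, hv, mul_add]

lemma midMul_mem_centralizer (x : Subring.centralizer (Set.range (j.comp ι)))
    {e : Tens ι (j.comp ι)} (he : ∀ b, lact ι (j.comp ι) b e = ract ι (j.comp ι) (j b) e) :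
    midMul ι j x e ∈ Subring.centralizer (Set.range j) := by
  rw [Subring.mem_centralizer_iff]
  rintro _ ⟨b, rfl⟩
  rw [← midMul_lact, he, midMul_ract]

lemma lact_tmul_one_one (c : C) :
    lact ι (j.comp ι) (ι c) (tmul ι (j.comp ι) 1 1) =
      ract ι (j.comp ι) (j (ι c)) (tmul ι (j.comp ι) 1 1) := by
  simpa using tmul_rel ι (j.comp ι) 1 c 1

variable {n : ℕ} {i : Tens ι (j.comp ι) →+ (Fin n → A)} {p : (Fin n → A) →+ Tens ι (j.comp ι)}

lemma apply_tmul_one_one_mem_centralizer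
    (hil : ∀ (b : B) x, i (lact ι (j.comp ι) b x) = fun k => j b * i x k)
    (hir : ∀ (a : A) x, i (ract ι (j.comp ι) a x) = fun k => i x k * a) (k : Fin n) :
    i (tmul ι (j.comp ι) 1 1) k ∈ Subring.centralizer (Set.range (j.comp ι)) := by
  rw [Subring.mem_centralizer_iff]
  rintro _ ⟨c, rfl⟩
  have := congrFun (congrArg i (lact_tmul_one_one (j := j) c)) k
  simp only [hil, hir] at this
  simpa using this

lemma lact_apply_single_one
    (hpl : ∀ (b : B) v, p (fun k => j b * v k) = lact ι (j.comp ι) b (p v))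
    (hpr : ∀ (a : A) v, p (fun k => v k * a) = ract ι (j.comp ι) a (p v)) (b : B) (k : Fin n) :
    lact ι (j.comp ι) b (p (Pi.single k 1)) = ract ι (j.comp ι) (j b) (p (Pi.single k 1)) := by
  rw [← hpl, ← hpr]
  congr 1
  funext m
  simp [Pi.single_apply, mul_ite, ite_mul]

lemma eq_sum_ract_apply_single_one
    (hpr : ∀ (a : A) v, p (fun k => v k * a) = ract ι (j.comp ι) a (p v))
    (hpi : ∀ x, p (i x) = x) (t : Tens ι (j.comp ι)) :
    t = ∑ k, ract ι (j.comp ι) (i t k) (p (Pi.single k 1)) := by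
  conv_lhs => rw [← hpi t, ← Finset.univ_sum_single (i t), map_sum]
  refine Finset.sum_congr rfl fun k _ => ?_
  rw [← hpr]
  congr 1
  funext m
  simp [Pi.single_apply, ite_mul]

end DualBasis

theorem centralizer_fg_projective_general
    {C B A : Type*} [Ring C] [Ring B] [Ring A]
    (ι : C →+* B) (j : B →+* A)
    (hRD : Subring.centralizer (Set.range j) ≤ Subring.centralizer (Set.range (j.comp ι)))
    (hH : ∃ n, LeftRelHSep ι j n) :
    ∃ (n : ℕ) (d : Fin n → ↥(Subring.centralizer (Set.range (j.comp ι))))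
      (h : Fin n → (↥(Subring.centralizer (Set.range (j.comp ι))) →+
        ↥(Subring.centralizer (Set.range j)))),
      (∀ (k : Fin n) (r : ↥(Subring.centralizer (Set.range j)))
          (x : ↥(Subring.centralizer (Set.range (j.comp ι)))),
        h k (Subring.inclusion hRD r * x) = r * h k x) ∧
      ∀ x : ↥(Subring.centralizer (Set.range (j.comp ι))),
        (x : A) = ∑ k, (h k x : A) * (d k : A) := by
  obtain ⟨n, i, p, hil, hir, hpl, hpr, hpi⟩ := hH
  let e : Fin n → Tens ι (j.comp ι) := fun k => p (Pi.single k 1)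
  refine ⟨n, fun k => ⟨_, apply_tmul_one_one_mem_centralizer hil hir k⟩,
    fun k => AddMonoidHom.mk'
      (fun x => ⟨midMul ι j x (e k), midMul_mem_centralizer x (lact_apply_single_one hpl hpr · k)⟩)
      (fun x y => Subtype.ext (midMul_add x y (e k))),
    fun k r x => Subtype.ext (midMul_inclusion_mul hRD r x (e k)), fun x => ?_⟩
  calc (x : A) = midMul ι j x (tmul ι (j.comp ι) 1 1) := by simp
    _ = midMul ι j x (∑ k, ract ι (j.comp ι) (i (tmul ι (j.comp ι) 1 1) k) (e k)) :=
      congrArg _ (eq_sum_ract_apply_single_one hpr hpi _)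
    _ = _ := by simp only [map_sum, midMul_ract]; rfl

/-- in a left relative H-separable tower `A ⊇ B ⊇ C`, the centralizer
`D = A^C` is a finitely generated projective left module over `R = A^B`
(stated via the dual basis criterion). -/
theorem centralizer_fg_projective
    {C B A : Type*} [Ring C] [Ring B] [Ring A]
    (ι : C →+* B) (j : B →+* A)
    (hι : Function.Injective ι) (hj : Function.Injective j)
    (hRD : Subring.centralizer (Set.range j) ≤ Subring.centralizer (Set.range (j.comp ι)))
    (hH : ∃ n, LeftRelHSep ι j n) :
    ∃ (n : ℕ) (d : Fin n → ↥(Subring.centralizer (Set.range (j.comp ι))))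
      (h : Fin n → (↥(Subring.centralizer (Set.range (j.comp ι))) →+
        ↥(Subring.centralizer (Set.range j)))),
      (∀ (k : Fin n) (r : ↥(Subring.centralizer (Set.range j)))
          (x : ↥(Subring.centralizer (Set.range (j.comp ι)))),
        h k (Subring.inclusion hRD r * x) = r * h k x) ∧
      ∀ x : ↥(Subring.centralizer (Set.range (j.comp ι))),
        (x : A) = ∑ k, (h k x : A) * (d k : A) :=
  centralizer_fg_projective_general ι j hRD hH

end
end

section
/- Let A ⊇ B ⊇ C be a left relative H-separable tower. If B ⊇ C is a separable extension, then D = A^C is a split extension of R = A^B; explicitly, if e ∈ (B ⊗_C B)^B with e¹e² = 1 is a separability element, then d ↦ e¹ d e² is an R-R-bimodule projection D → R with 1 ↦ 1. -/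
/-!  A noncommutative relative tensor product `L ⊗_C R` for a ring `C` mapping
into rings `L` (acting on the right through `f`) and `R` (acting on the left
through `g`), together with the outer left `L`-action `lact`, the outer right
`R`-action `ract`, a lifting principle for balanced biadditive maps, and the
multiplication map. -/

open scoped TensorProduct

noncomputable section
open NCT

/-- The sandwich map `B ⊗_C B → (D →+ A)`, `b ⊗ b' ↦ (d ↦ b d b')`,
where `D = A^C`. -/
def sandw {C B A : Type*} [Ring C] [Ring B] [Ring A] (ι : C →+* B) (j : B →+* A) :
    Tens ι ι →+ (↥(Subring.centralizer (Set.range (j.comp ι))) →+ A) :=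
  lift ι ι
    (mkBilin (fun b b' => AddMonoidHom.mk'
        (fun d : ↥(Subring.centralizer (Set.range (j.comp ι))) => j b * (d : A) * j b')
        (fun x y => by push_cast; rw [mul_add, add_mul]))
      (fun b b' b'' => by
        ext d; simp only [AddMonoidHom.mk'_apply, map_add]; rw [add_mul, add_mul]; rfl)
      (fun b b' b'' => by
        ext d; simp only [AddMonoidHom.mk'_apply, map_add]; rw [mul_add]; rfl))
    (fun b c b' => by
      ext d
      have hd := d.2
      rw [Subring.mem_centralizer_iff] at hd
      have hcd : j (ι c) * (d : A) = (d : A) * j (ι c) := hd _ ⟨c, rfl⟩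
      simp only [mkBilin_apply, AddMonoidHom.mk'_apply, map_mul]
      rw [mul_assoc (j b) (j (ι c)) (d : A), hcd, ← mul_assoc,
        mul_assoc (j b * (d : A))])

/-! Since `e` is `B`-central and the sandwich `x ↦ (d ↦ x¹ d x²)` turns the outer `B`-actions
on `B ⊗_C B` into multiplication by `B` on `A`, every `e¹ d e²` commutes with `B`, i.e. lies in
`R`. An `r ∈ R` commutes with `e¹` and `e²`, so it can be pulled out of `e¹ (r d) e²` on either
side, and `e¹ r e² = r e¹ e² = r`. -/

section Sandwich

variable {C B A : Type*} [Ring C] [Ring B] [Ring A] (ι : C →+* B) (j : B →+* A)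

lemma sandw_tmul (b b' : B) (d : ↥(Subring.centralizer (Set.range (j.comp ι)))) :
    sandw ι j (tmul ι ι b b') d = j b * (d : A) * j b' := rfl

lemma sandw_lact (b : B) (x : Tens ι ι) (d : ↥(Subring.centralizer (Set.range (j.comp ι)))) :
    sandw ι j (lact ι ι b x) d = j b * sandw ι j x d := by
  induction x using tens_induction ι ι with
  | zero => simp
  | tm b₁ b₂ => simp only [lact_tmul, sandw_tmul, map_mul, mul_assoc]
  | add y z hy hz => simp only [map_add, AddMonoidHom.add_apply, hy, hz, mul_add]

lemma sandw_ract (b : B) (x : Tens ι ι) (d : ↥(Subring.centralizer (Set.range (j.comp ι)))) :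
    sandw ι j (ract ι ι b x) d = sandw ι j x d * j b := by
  induction x using tens_induction ι ι with
  | zero => simp
  | tm b₁ b₂ => simp only [ract_tmul, sandw_tmul, map_mul, mul_assoc]
  | add y z hy hz => simp only [map_add, AddMonoidHom.add_apply, hy, hz, add_mul]

lemma sandw_one (x : Tens ι ι) :
    sandw ι j x 1 = j (mulMap ι ι (RingHom.id B) (fun _ => rfl) x) := by
  induction x using tens_induction ι ι with
  | zero => simp
  | tm b₁ b₂ =>
    rw [sandw_tmul, mulMap_tmul, OneMemClass.coe_one, mul_one, RingHom.id_apply, map_mul]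
  | add y z hy hz => simp only [map_add, AddMonoidHom.add_apply, hy, hz]

lemma sandw_mem_centralizer_range {x : Tens ι ι} (hx : ∀ b : B, lact ι ι b x = ract ι ι b x)
    (d : ↥(Subring.centralizer (Set.range (j.comp ι)))) :
    sandw ι j x d ∈ Subring.centralizer (Set.range j) := by
  rw [Subring.mem_centralizer_iff]
  rintro _ ⟨b, rfl⟩
  rw [← sandw_lact, hx, sandw_ract]

variable (hRD : Subring.centralizer (Set.range j) ≤ Subring.centralizer (Set.range (j.comp ι)))

lemma sandw_inclusion_mul (x : Tens ι ι) (r : ↥(Subring.centralizer (Set.range j)))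
    (d : ↥(Subring.centralizer (Set.range (j.comp ι)))) :
    sandw ι j x (Subring.inclusion hRD r * d) = (r : A) * sandw ι j x d := by
  induction x using tens_induction ι ι with
  | zero => simp
  | tm b₁ b₂ =>
    have hr : j b₁ * r = r * j b₁ := r.2 (j b₁) ⟨b₁, rfl⟩
    simp only [sandw_tmul, Subring.coe_mul, Subring.coe_inclusion, ← mul_assoc, hr]
  | add y z hy hz => simp only [map_add, AddMonoidHom.add_apply, hy, hz, mul_add]

lemma sandw_mul_inclusion (x : Tens ι ι) (r : ↥(Subring.centralizer (Set.range j)))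
    (d : ↥(Subring.centralizer (Set.range (j.comp ι)))) :
    sandw ι j x (d * Subring.inclusion hRD r) = sandw ι j x d * r := by
  induction x using tens_induction ι ι with
  | zero => simp
  | tm b₁ b₂ =>
    have hr : j b₂ * r = r * j b₂ := r.2 (j b₂) ⟨b₂, rfl⟩
    simp only [sandw_tmul, Subring.coe_mul, Subring.coe_inclusion, mul_assoc, ← hr]
  | add y z hy hz => simp only [map_add, AddMonoidHom.add_apply, hy, hz, add_mul]

end Sandwich

theorem centralizer_split_of_separable_general
    {C B A : Type*} [Ring C] [Ring B] [Ring A]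
    (ι : C →+* B) (j : B →+* A)
    (hRD : Subring.centralizer (Set.range j) ≤ Subring.centralizer (Set.range (j.comp ι)))
    (e : Tens ι ι)
    (hecent : ∀ b : B, lact ι ι b e = ract ι ι b e)
    (hemu : mulMap ι ι (RingHom.id B) (fun _ => rfl) e = 1) :
    (∀ d : ↥(Subring.centralizer (Set.range (j.comp ι))),
      sandw ι j e d ∈ Subring.centralizer (Set.range j)) ∧
    (∀ r : ↥(Subring.centralizer (Set.range j)),
      sandw ι j e (Subring.inclusion hRD r) = r) ∧
    (∀ (r : ↥(Subring.centralizer (Set.range j)))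
        (d : ↥(Subring.centralizer (Set.range (j.comp ι)))),
      sandw ι j e (Subring.inclusion hRD r * d) = (r : A) * sandw ι j e d) ∧
    (∀ (r : ↥(Subring.centralizer (Set.range j)))
        (d : ↥(Subring.centralizer (Set.range (j.comp ι)))),
      sandw ι j e (d * Subring.inclusion hRD r) = sandw ι j e d * (r : A)) := by
  refine ⟨sandw_mem_centralizer_range ι j hecent, fun r => ?_,
    sandw_inclusion_mul ι j hRD e, sandw_mul_inclusion ι j hRD e⟩
  calc sandw ι j e (Subring.inclusion hRD r)
      = sandw ι j e (1 * Subring.inclusion hRD r) := by rw [one_mul]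
    _ = r := by rw [sandw_mul_inclusion, sandw_one, hemu, map_one, one_mul]

/-- in a left relative H-separable tower `A ⊇ B ⊇ C`, if `B ⊇ C` is a
separable extension with separability element `e`, then `d ↦ e¹ d e²` is an `R`-`R`-bimodule
projection `D → R` restricting to the identity on `R`; in particular `D ⊇ R` is split. -/
theorem centralizer_split_of_separable
    {C B A : Type*} [Ring C] [Ring B] [Ring A]
    (ι : C →+* B) (j : B →+* A)
    (hι : Function.Injective ι) (hj : Function.Injective j)
    (hRD : Subring.centralizer (Set.range j) ≤ Subring.centralizer (Set.range (j.comp ι)))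
    (hH : ∃ n, LeftRelHSep ι j n)
    (e : Tens ι ι)
    (hecent : ∀ b : B, lact ι ι b e = ract ι ι b e)
    (hemu : mulMap ι ι (RingHom.id B) (fun _ => rfl) e = 1) :
    (∀ d : ↥(Subring.centralizer (Set.range (j.comp ι))),
      sandw ι j e d ∈ Subring.centralizer (Set.range j)) ∧
    (∀ r : ↥(Subring.centralizer (Set.range j)),
      sandw ι j e (Subring.inclusion hRD r) = r) ∧
    (∀ (r : ↥(Subring.centralizer (Set.range j)))
        (d : ↥(Subring.centralizer (Set.range (j.comp ι)))),
      sandw ι j e (Subring.inclusion hRD r * d) = (r : A) * sandw ι j e d) ∧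
    (∀ (r : ↥(Subring.centralizer (Set.range j)))
        (d : ↥(Subring.centralizer (Set.range (j.comp ι)))),
      sandw ι j e (d * Subring.inclusion hRD r) = sandw ι j e d * (r : A)) :=
  centralizer_split_of_separable_general ι j hRD e hecent hemu

end
end
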